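/- arXiv:1702.02847 — 12 statements merged into one kernel-verified Lean document; each statement's English description precedes it below -/
import Mathlib

section
/- Let L be a frame, X a set, n a natural number, and R : (Fin n → X) → X → Prop an (n+1)-ary relation on X. Then the convolution operation f_R is completely additive in each coordinate: for every index k : Fin n, every α : Fin n → (X → L), and every family β : J → (X → L), f_R (Function.update α k (⨆_{j∈J} β j)) = ⨆_{j∈J} f_R (Function.update α k (β j)), where suprema of functions X → L are taken pointwise. -/
/-- The convolution operation of an `(n+1)`-ary relation `R` on `X` over a complete
lattice `L`. -/
def conv {X L : Type*} [CompleteLattice L] {n : ℕ}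
    (R : (Fin n → X) → X → Prop) (α : Fin n → X → L) : X → L :=
  fun x => ⨆ (v : Fin n → X) (_ : R v x), ⨅ k, α k (v k)

theorem iInf_update {ι L : Type*} [CompleteLattice L] [DecidableEq ι]
    (f : ι → L) (k : ι) (a : L) :
    ⨅ i, Function.update f k a i = a ⊓ ⨅ (i) (_ : i ≠ k), f i := by
  rw [iInf_split_single _ k, Function.update_self]
  congr 1
  exact iInf_congr fun i => iInf_congr fun hi => Function.update_of_ne hi a f

theorem iInf_update_iSup {ι J L : Type*} [Order.Frame L] [DecidableEq ι]
    (f : ι → L) (k : ι) (b : J → L) :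
    ⨅ i, Function.update f k (⨆ j, b j) i = ⨆ j, ⨅ i, Function.update f k (b j) i := by
  simp only [iInf_update, iSup_inf_eq]

theorem conv_apply_update {X L : Type*} [CompleteLattice L] {n : ℕ}
    (R : (Fin n → X) → X → Prop) (k : Fin n) (α : Fin n → X → L) (g : X → L) (x : X) :
    conv R (Function.update α k g) x =
      ⨆ (v : Fin n → X) (_ : R v x), ⨅ i, Function.update (fun i => α i (v i)) k (g (v k)) i := by
  refine iSup_congr fun v => iSup_congr fun _ => iInf_congr fun i => ?_
  exact Function.apply_update (fun i (h : X → L) => h (v i)) α k g i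

/-- For `L` a frame (the lattice reduct of a complete Heyting algebra), the convolution
operation is completely additive in each coordinate. -/
theorem stmt_1 {X : Type*} {L : Type*} [Order.Frame L] {n : ℕ}
    (R : (Fin n → X) → X → Prop) (k : Fin n) (α : Fin n → X → L)
    {J : Type*} (β : J → X → L) :
    conv R (Function.update α k (⨆ j, β j)) =
      ⨆ j, conv R (Function.update α k (β j)) := by
  funext x
  simp only [iSup_apply, conv_apply_update, iInf_update_iSup]
  rw [iSup_comm]
  exact iSup_congr fun v => iSup_comm
end

section
/- Let L be a complete lattice, X a set, n a natural number, and R : (Fin n → X) → X → Prop an (n+1)-ary relation on X. Then the convolution operation f_R is finitely supported: for all α : Fin n → (X → L), f_R α = ⨆ { f_R δ : δ : Fin n → (X → L), ∀ k, δ k ≤ α k and δ k has finite support }, where δ k has finite support means the set {x | δ k x ≠ ⊥} is finite, and the order and supremum on X → L are pointwise. -/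
/-- The convolution operation is finitely supported: `f_R α` is the supremum of the
values `f_R δ` over all tuples `δ` of finitely supported functions with `δ k ≤ α k`. -/
theorem stmt_2 {X : Type*} {L : Type*} [CompleteLattice L] {n : ℕ}
    (R : (Fin n → X) → X → Prop) (α : Fin n → X → L) :
    conv R α =
      ⨆ (δ : Fin n → X → L)
        (_ : ∀ k, δ k ≤ α k ∧ {x | δ k x ≠ ⊥}.Finite), conv R δ := by
  classical
  apply le_antisymm
  · intro x
    simp only [conv, iSup_apply]
    refine iSup₂_le fun v hv => ?_
    set δ : Fin n → X → L := fun k y => if y = v k then α k (v k) else ⊥ with hδ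
    have h1 : ∀ k, δ k ≤ α k ∧ {x | δ k x ≠ ⊥}.Finite := by
      intro k
      constructor
      · intro y
        by_cases h : y = v k <;> simp [δ, h]
      · refine Set.Finite.subset (Set.finite_singleton (v k)) ?_
        intro y hy
        by_cases h : y = v k
        · simp [h]
        · simp [δ, h] at hy
    have h2 : (⨅ k, α k (v k)) ≤ conv R δ x := by
      refine le_trans ?_ (le_iSup₂ (f := fun v (_ : R v x) => ⨅ k, δ k (v k)) v hv)
      refine le_iInf fun k => le_trans (iInf_le _ k) ?_
      simp [δ]
    exact le_trans h2 (le_trans (le_iSup₂ (f := fun δ _ => conv R δ x) δ h1) le_rfl)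
  · refine iSup₂_le fun δ hδ => ?_
    intro x
    refine iSup₂_le fun v hv => ?_
    refine le_trans (le_iInf fun k => le_trans (iInf_le _ k) ((hδ k).1 _)) ?_
    exact le_iSup₂ (f := fun v (_ : R v x) => ⨅ k, α k (v k)) v hv
end

section
/- Let L and M be complete lattices and φ : L → M a map that preserves arbitrary suprema, binary infima, and the top element. Let X be a set, n a natural number, and R : (Fin n → X) → X → Prop an (n+1)-ary relation on X. Then for all α : Fin n → (X → L) and all x ∈ X, φ (f_R^L α x) = f_R^M (fun k => φ ∘ α k) x, where f_R^L and f_R^M denote the convolution operations over L and M respectively. That is, composition with φ is a homomorphism from the convolution algebra over L to the convolution algebra over M. -/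
/-! The hypotheses on `φ` say exactly that it is a frame homomorphism. Such a map commutes with
the outer supremum in `conv` directly and with the inner infimum because that infimum is finite. -/

theorem map_iInf_of_fintype {F L M ι : Type*} [CompleteLattice L] [CompleteLattice M]
    [FunLike F L M] [InfTopHomClass F L M] [Fintype ι] (φ : F) (f : ι → L) :
    φ (⨅ i, f i) = ⨅ i, φ (f i) := by
  rw [← Finset.inf_univ_eq_iInf, ← Finset.inf_univ_eq_iInf, map_finset_inf]
  rfl

theorem map_conv {F L M X : Type*} [CompleteLattice L] [CompleteLattice M] [FunLike F L M]
    [FrameHomClass F L M] {n : ℕ} (φ : F) (R : (Fin n → X) → X → Prop) (α : Fin n → X → L)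
    (x : X) : φ (conv R α x) = conv R (fun k => φ ∘ α k) x := by
  simp only [conv, map_iSup₂, map_iInf_of_fintype, Function.comp_apply]

/-- If `φ : L → M` preserves arbitrary suprema, binary infima and the top element, then
composition with `φ` is a homomorphism between the corresponding convolution algebras. -/
theorem stmt_3 {L M : Type*} [CompleteLattice L] [CompleteLattice M] (φ : L → M)
    (hsup : ∀ s : Set L, φ (sSup s) = sSup (φ '' s))
    (hinf : ∀ a b : L, φ (a ⊓ b) = φ a ⊓ φ b)
    (htop : φ ⊤ = ⊤)
    {X : Type*} {n : ℕ} (R : (Fin n → X) → X → Prop)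
    (α : Fin n → X → L) (x : X) :
    φ (conv R α x) = conv R (fun k => φ ∘ α k) x :=
  map_conv (⟨⟨⟨φ, hinf⟩, htop⟩, hsup⟩ : FrameHom L M) R α x
end

section
/- Let X and Y be sets, n a natural number, R : (Fin n → X) → X → Prop an (n+1)-ary relation on X, S : (Fin n → Y) → Y → Prop an (n+1)-ary relation on Y, and p : X → Y a p-morphism, i.e. for every x ∈ X, { y⃗ : Fin n → Y | S y⃗ (p x) } = { p ∘ x⃗ | x⃗ : Fin n → X with R x⃗ x }. Then for every complete lattice L, all β : Fin n → (Y → L), and all x ∈ X, f_R (fun k => β k ∘ p) x = f_S β (p x). That is, precomposition with p is a homomorphism from the convolution algebra of (Y,S) over L to the convolution algebra of (X,R) over L. -/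
/-- If `p : X → Y` is a p-morphism between relational structures `(X, R)` and `(Y, S)`,
then precomposition with `p` is a homomorphism from the convolution algebra of `(Y, S)`
over `L` to the convolution algebra of `(X, R)` over `L`. -/
theorem stmt_5 {X Y : Type*} {n : ℕ}
    (R : (Fin n → X) → X → Prop) (S : (Fin n → Y) → Y → Prop) (p : X → Y)
    (hp : ∀ x : X,
      {w : Fin n → Y | S w (p x)} = (fun v : Fin n → X => p ∘ v) '' {v | R v x})
    {L : Type*} [CompleteLattice L] (β : Fin n → Y → L) (x : X) :
    conv R (fun k => β k ∘ p) x = conv S β (p x) := by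
  apply le_antisymm
  · refine iSup₂_le fun v hv => ?_
    have hS : S (p ∘ v) (p x) := by
      exact (Set.ext_iff.mp (hp x) (p ∘ v)).2 ⟨v, hv, rfl⟩
    exact le_iSup₂_of_le (p ∘ v) hS (le_refl _)
  · refine iSup₂_le fun w hw => ?_
    obtain ⟨v, hv, rfl⟩ := (Set.ext_iff.mp (hp x) w).1 hw
    exact le_iSup₂_of_le v hv (le_refl _)
end

section
/- Let L be a complete lattice with ⊥ ≠ ⊤, X a set, n a natural number, and R : (Fin n → X) → X → Prop an (n+1)-ary relation on X. Let ι : Set X → (X → L) send a set A to its characteristic function (⊤ on A, ⊥ off A). Then ι is injective, preserves arbitrary unions as suprema, binary intersections as infima, and ∅, X as ⊥, ⊤, and for all A : Fin n → Set X, f_R (fun k => ι (A k)) = ι (g_R A), where g_R A = {x | ∃ x⃗, R x⃗ x ∧ ∀ k, x⃗ k ∈ A k} is the complex-algebra operation. Hence the complex algebra of (X,R) embeds into the convolution algebra over L. -/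
open Classical in
/-- The characteristic function of a set, with values in a complete lattice. -/
noncomputable def indicatorFn {X L : Type*} [CompleteLattice L] (A : Set X) : X → L :=
  fun x => if x ∈ A then ⊤ else ⊥

/-- For a complete lattice `L` with `⊥ ≠ ⊤`, the map sending a set to its characteristic
function embeds the complex algebra of `(X, R)` into the convolution algebra over `L`:
it is injective, sends unions to suprema, binary intersections to infima, `∅`, `X` to
`⊥`, `⊤`, and intertwines the complex-algebra operation with the convolution. -/
theorem stmt_6 {X L : Type*} [CompleteLattice L] (hL : (⊥ : L) ≠ ⊤) {n : ℕ}
    (R : (Fin n → X) → X → Prop) :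
    Function.Injective (indicatorFn (X := X) (L := L)) ∧
    (∀ s : Set (Set X), indicatorFn (L := L) (⋃₀ s) = ⨆ A ∈ s, indicatorFn A) ∧
    (∀ A B : Set X, indicatorFn (L := L) (A ∩ B) = indicatorFn A ⊓ indicatorFn B) ∧
    indicatorFn (L := L) (∅ : Set X) = ⊥ ∧
    indicatorFn (L := L) (Set.univ : Set X) = ⊤ ∧
    (∀ A : Fin n → Set X,
        conv R (fun k => indicatorFn (L := L) (A k)) =
          indicatorFn {x | ∃ v : Fin n → X, R v x ∧ ∀ k, v k ∈ A k}) := by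
  classical
  refine ⟨?_, ?_, ?_, ?_, ?_, ?_⟩
  · intro A B h
    ext x
    have hx := congrFun h x
    simp only [indicatorFn] at hx
    constructor <;> intro hm
    · by_contra hB
      rw [if_pos hm, if_neg hB] at hx
      exact hL hx.symm
    · by_contra hA
      rw [if_neg hA, if_pos hm] at hx
      exact hL hx
  · intro s
    ext x
    simp only [indicatorFn, iSup_apply]
    by_cases hx : x ∈ ⋃₀ s
    · rw [if_pos hx]
      obtain ⟨A, hA, hxA⟩ := hx
      refine le_antisymm ?_ le_top
      refine le_trans ?_ (le_biSup (f := fun A => if x ∈ A then (⊤:L) else ⊥) hA)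
      simp [hxA]
    · rw [if_neg hx]
      refine le_antisymm bot_le (iSup_le fun A => iSup_le fun hA => ?_)
      have : x ∉ A := fun hxA => hx ⟨A, hA, hxA⟩
      simp [indicatorFn, this]
  · intro A B
    ext x
    simp only [indicatorFn, Pi.inf_apply, Set.mem_inter_iff]
    by_cases hA : x ∈ A <;> by_cases hB : x ∈ B <;> simp [hA, hB]
  · ext x; simp [indicatorFn]
  · ext x; simp [indicatorFn]
  · intro A
    ext x
    simp only [conv, indicatorFn, Set.mem_setOf_eq]
    by_cases hx : ∃ v : Fin n → X, R v x ∧ ∀ k, v k ∈ A k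
    · obtain ⟨v, hv, hvA⟩ := hx
      rw [if_pos ⟨v, hv, hvA⟩]
      refine le_antisymm le_top ?_
      refine le_trans ?_
        (le_iSup₂ (f := fun v (_ : R v x) => ⨅ k, if v k ∈ A k then (⊤:L) else ⊥) v hv)
      exact le_iInf fun k => by simp [hvA k]
    · rw [if_neg hx]
      refine le_antisymm (iSup_le fun v => iSup_le fun hv => ?_) bot_le
      have : ¬ ∀ k, v k ∈ A k := fun h => hx ⟨v, hv, h⟩
      push_neg at this
      obtain ⟨k, hk⟩ := this
      exact le_trans (iInf_le _ k) (by simp [hk])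
end

section
/- Let L be a complete bounded distributive lattice. For a set X, define f : (X → L) → (X → L) by f(α)(x) = ⨆_{y∈X} α(y) (the convolution operation of the full binary relation ∇_X = X × X on X). Then the following are equivalent: (1) for every set X and all α, β : X → L, f(α) ⊓ f(β) = f(f(α) ⊓ β) in X → L (with pointwise meet); (2) L satisfies u ⊓ ⨆_{j∈J} v_j = ⨆_{j∈J} (u ⊓ v_j) for every element u and every family (v_j), i.e. L is a frame. -/
universe u

/-- The convolution operation of the full binary relation `∇_X = X × X` on `X` over a
complete lattice `L`: `f(α)(x) = ⨆_{y ∈ X} α(y)`. -/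
def fullConv {X : Type*} {L : Type*} [CompleteLattice L] (α : X → L) : X → L :=
  fun _ => ⨆ y : X, α y

/-- For a complete bounded distributive lattice `L`, the equation
`f(a) ⊓ f(b) = f(f(a) ⊓ b)` holds in the convolution algebra of the full binary relation
`∇_X` over `L` for every set `X` iff `L` is meet-continuous, i.e. a frame. -/
theorem stmt_12 {L : Type u} [CompleteLattice L]
    (hdist : ∀ a b c : L, a ⊓ (b ⊔ c) = (a ⊓ b) ⊔ (a ⊓ c)) :
    (∀ (X : Type u) (α β : X → L),
        fullConv α ⊓ fullConv β = fullConv (fullConv α ⊓ β)) ↔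
    (∀ (u : L) {J : Type u} (v : J → L), u ⊓ ⨆ j, v j = ⨆ j, u ⊓ v j) := by
  constructor
  · intro h u J v
    rcases isEmpty_or_nonempty J with hJ | hJ
    · simp [iSup_of_empty]
    · haveI := hJ
      have := congrFun (h J (fun _ => u) v) hJ.some
      simpa [fullConv, iSup_const] using this
  · intro h X α β
    funext x
    have : (⨆ y : X, α y) ⊓ ⨆ y : X, β y = ⨆ y : X, (⨆ z : X, α z) ⊓ β y := h _ _
    simpa [fullConv] using this
end

section
/- Let L be a complete lattice satisfying the join-continuity law a ⊔ ⨅_{j∈J} b_j = ⨅_{j∈J} (a ⊔ b_j) for all elements a and all families (b_j) (a complete co-frame, i.e. the order dual of a frame). Let X be a set, n a natural number, and S : (Fin n → X) → X → Prop an (n+1)-ary relation on X. Then the dual convolution operation g_S is completely multiplicative in each coordinate: for every k : Fin n, every α : Fin n → (X → L), and every family β : J → (X → L), g_S (Function.update α k (⨅_{j∈J} β j)) = ⨅_{j∈J} g_S (Function.update α k (β j)), infima of functions being pointwise. -/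
/-- The dual convolution operation of an `(n+1)`-ary relation `S` on `X` over a complete
lattice `L`. -/
def dconv {X L : Type*} [CompleteLattice L] {n : ℕ}
    (S : (Fin n → X) → X → Prop) (α : Fin n → X → L) : X → L :=
  fun x => ⨅ (v : Fin n → X) (_ : S v x), ⨆ k, α k (v k)

/-- For `L` a complete co-frame (a join-continuous complete lattice, the order dual of a
frame), the dual convolution operation is completely multiplicative in each
coordinate. -/
theorem stmt_14 {X : Type*} {L : Type*} [Order.Coframe L] {n : ℕ}
    (S : (Fin n → X) → X → Prop) (k : Fin n) (α : Fin n → X → L)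
    {J : Type*} (β : J → X → L) :
    dconv S (Function.update α k (⨅ j, β j)) =
      ⨅ j, dconv S (Function.update α k (β j)) := by
  have key : ∀ (c : X → L) (v : Fin n → X),
      (⨆ i, Function.update α k c i (v i)) =
        c (v k) ⊔ ⨆ i, ⨆ _ : i ≠ k, α i (v i) := by
    intro c v
    have : ∀ i, Function.update α k c i (v i) =
        if i = k then c (v i) else α i (v i) := by
      intro i; by_cases h : i = k <;> simp [h]
    simp_rw [this, iSup_ite]
    congr 1
    simp
  funext x
  simp only [dconv, iInf_apply]
  rw [iInf_comm]
  refine iInf_congr fun v => ?_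
  rw [iInf_comm]
  refine iInf_congr fun hv => ?_
  simp_rw [key, iInf_apply, iInf_sup_eq]
end

section
/- Let L be a completely distributive complete lattice with ⊥ ≠ ⊤. Let X be a set, let (R_i)_{i∈I} and (S_j)_{j∈J} be two families of finitary relations on X with arities τ₁ : I → ℕ and τ₂ : J → ℕ (each R_i being (τ₁ i + 1)-ary, each S_j being (τ₂ j + 1)-ary). Consider terms built from variables, constants ⊥, ⊤, binary symbols ⊓, ⊔, a (τ₁ i)-ary symbol for each i ∈ I, and a (τ₂ j)-ary symbol for each j ∈ J, interpreted in the algebra on X → L with pointwise lattice operations, the i-th symbols interpreted by the convolution operations f_{R_i}, and the j-th symbols by the dual convolution operations g_{S_j}; likewise interpreted in the algebra on X → Prop. Then an equation s ≈ t between such terms holds under every assignment in X → L if and only if it holds under every assignment in X → Prop. -/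
/-- Terms built from variables in `V`, constants `⊥` and `⊤`, binary symbols `⊓` and
`⊔`, a `τ₁ i`-ary symbol for each `i : I`, and a `τ₂ j`-ary symbol for each `j : J`. -/
inductive ExtTerm (I J : Type*) (τ₁ : I → ℕ) (τ₂ : J → ℕ) (V : Type*) where
  | var : V → ExtTerm I J τ₁ τ₂ V
  | bot : ExtTerm I J τ₁ τ₂ V
  | top : ExtTerm I J τ₁ τ₂ V
  | inf : ExtTerm I J τ₁ τ₂ V → ExtTerm I J τ₁ τ₂ V → ExtTerm I J τ₁ τ₂ V
  | sup : ExtTerm I J τ₁ τ₂ V → ExtTerm I J τ₁ τ₂ V → ExtTerm I J τ₁ τ₂ V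
  | op : (i : I) → (Fin (τ₁ i) → ExtTerm I J τ₁ τ₂ V) → ExtTerm I J τ₁ τ₂ V
  | dop : (j : J) → (Fin (τ₂ j) → ExtTerm I J τ₁ τ₂ V) → ExtTerm I J τ₁ τ₂ V

/-- Interpretation of an extended term in `X → L`, with the lattice symbols interpreted
pointwise, the `i`-th symbols by the convolutions of the `R i`, and the `j`-th symbols
by the dual convolutions of the `S j`. -/
def evalExtTerm {I J V X L : Type*} [CompleteLattice L] {τ₁ : I → ℕ} {τ₂ : J → ℕ}
    (R : ∀ i, (Fin (τ₁ i) → X) → X → Prop) (S : ∀ j, (Fin (τ₂ j) → X) → X → Prop)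
    (v : V → X → L) : ExtTerm I J τ₁ τ₂ V → (X → L)
  | .var p => v p
  | .bot => ⊥
  | .top => ⊤
  | .inf s t => evalExtTerm R S v s ⊓ evalExtTerm R S v t
  | .sup s t => evalExtTerm R S v s ⊔ evalExtTerm R S v t
  | .op i ts => conv (R i) fun k => evalExtTerm R S v (ts k)
  | .dop j ts => dconv (S j) fun k => evalExtTerm R S v (ts k)


section Aux

variable {M N : Type*} [CompleteLattice M] [CompleteLattice N] (h : M → N)

theorem map_iSup'' (h1 : ∀ s : Set M, h (sSup s) = sSup (h '' s))
    {κ : Sort*} (f : κ → M) : h (⨆ k, f k) = ⨆ k, h (f k) := by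
  rw [iSup, h1, ← Set.range_comp, iSup]; rfl

theorem map_iInf'' (h2 : ∀ s : Set M, h (sInf s) = sInf (h '' s))
    {κ : Sort*} (f : κ → M) : h (⨅ k, f k) = ⨅ k, h (f k) := by
  rw [iInf, h2, ← Set.range_comp, iInf]; rfl

theorem map_bot'' (h1 : ∀ s : Set M, h (sSup s) = sSup (h '' s)) : h ⊥ = ⊥ := by
  have := h1 ∅; simpa using this

theorem map_top'' (h2 : ∀ s : Set M, h (sInf s) = sInf (h '' s)) : h ⊤ = ⊤ := by
  have := h2 ∅; simpa using this

theorem map_sup'' (h1 : ∀ s : Set M, h (sSup s) = sSup (h '' s)) (a b : M) :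
    h (a ⊔ b) = h a ⊔ h b := by
  rw [← sSup_pair, h1, Set.image_pair, sSup_pair]

theorem map_inf'' (h2 : ∀ s : Set M, h (sInf s) = sInf (h '' s)) (a b : M) :
    h (a ⊓ b) = h a ⊓ h b := by
  rw [← sInf_pair, h2, Set.image_pair, sInf_pair]

end Aux

theorem eval_natural {I J V X M N : Type*} [CompleteLattice M] [CompleteLattice N]
    {τ₁ : I → ℕ} {τ₂ : J → ℕ}
    (R : ∀ i, (Fin (τ₁ i) → X) → X → Prop) (S : ∀ j, (Fin (τ₂ j) → X) → X → Prop)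
    (h : M → N)
    (h1 : ∀ s : Set M, h (sSup s) = sSup (h '' s))
    (h2 : ∀ s : Set M, h (sInf s) = sInf (h '' s))
    (v : V → X → M) (t : ExtTerm I J τ₁ τ₂ V) :
    ∀ x, h (evalExtTerm R S v t x) = evalExtTerm R S (fun p y => h (v p y)) t x := by
  induction t with
  | var p => intro x; rfl
  | bot => intro x; simpa [evalExtTerm] using map_bot'' h h1
  | top => intro x; simpa [evalExtTerm] using map_top'' h h2
  | inf a b iha ihb =>
      intro x
      simp only [evalExtTerm, Pi.inf_apply, map_inf'' h h2, iha, ihb]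
  | sup a b iha ihb =>
      intro x
      simp only [evalExtTerm, Pi.sup_apply, map_sup'' h h1, iha, ihb]
  | op i ts ih =>
      intro x
      simp only [evalExtTerm, conv, map_iSup'' h h1, map_iInf'' h h2]
      simp only [ih]
  | dop j ts ih =>
      intro x
      simp only [evalExtTerm, dconv, map_iSup'' h h1, map_iInf'' h h2]
      simp only [ih]

section Homs

variable {L : Type*} [CompleteLattice L]

/-- The embedding of `Prop` into a complete lattice. -/
def propEmb (L : Type*) [CompleteLattice L] (p : Prop) : L := ⨆ _ : p, ⊤

theorem propEmb_sSup (s : Set Prop) : propEmb L (sSup s) = sSup (propEmb L '' s) := by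
  classical
  by_cases h : sSup s
  · obtain ⟨p, hp, hpt⟩ := sSup_Prop_eq.mp h
    apply le_antisymm
    · exact le_trans (by simp [propEmb, hpt]) (le_sSup ⟨p, hp, rfl⟩)
    · exact le_trans le_top (by simp [propEmb, h])
  · apply le_antisymm
    · simp [propEmb, h]
    · apply sSup_le
      rintro y ⟨p, hp, rfl⟩
      have : ¬ p := fun hpt => h (sSup_Prop_eq.mpr ⟨p, hp, hpt⟩)
      simp [propEmb, this]

theorem propEmb_sInf (s : Set Prop) : propEmb L (sInf s) = sInf (propEmb L '' s) := by
  classical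
  by_cases h : sInf s
  · apply le_antisymm
    · apply le_sInf
      rintro y ⟨p, hp, rfl⟩
      have : p := sInf_Prop_eq.mp h p hp
      simp [propEmb, this]
    · exact le_trans le_top (by simp [propEmb, h])
  · obtain ⟨p, hp, hpf⟩ : ∃ p ∈ s, ¬ p := by
      by_contra hc
      push_neg at hc
      exact h (sInf_Prop_eq.mpr hc)
    apply le_antisymm
    · simp [propEmb, h]
    · exact le_trans (sInf_le ⟨p, hp, rfl⟩) (by simp [propEmb, hpf])

theorem propEmb_injective (hL : (⊥ : L) ≠ ⊤) : Function.Injective (propEmb L) := by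
  classical
  intro p q hpq
  by_cases hp : p <;> by_cases hq : q
  · exact propext (iff_of_true hp hq)
  · exfalso; apply hL
    have h1 : propEmb L p = ⊤ := by simp [propEmb, hp]
    have h2 : propEmb L q = ⊥ := by simp [propEmb, hq]
    rw [← h2, ← hpq, h1]
  · exfalso; apply hL
    have h1 : propEmb L p = ⊥ := by simp [propEmb, hp]
    have h2 : propEmb L q = ⊤ := by simp [propEmb, hq]
    rw [← h1, hpq, h2]
  · exact propext (iff_of_false hp hq)

/-- membership hom from lower sets to Prop -/
theorem memHom_sSup (a : L) (s : Set (LowerSet L)) :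
    (a ∈ sSup s) = sSup ((fun U : LowerSet L => a ∈ U) '' s) := by
  rw [sSup_Prop_eq]
  apply propext
  constructor
  · intro h
    obtain ⟨U, hU, haU⟩ := LowerSet.mem_sSup_iff.mp h
    exact ⟨a ∈ U, ⟨U, hU, rfl⟩, haU⟩
  · rintro ⟨p, ⟨U, hU, rfl⟩, hp⟩
    exact LowerSet.mem_sSup_iff.mpr ⟨U, hU, hp⟩

theorem memHom_sInf (a : L) (s : Set (LowerSet L)) :
    (a ∈ sInf s) = sInf ((fun U : LowerSet L => a ∈ U) '' s) := by
  rw [sInf_Prop_eq]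
  apply propext
  constructor
  · rintro h p ⟨U, hU, rfl⟩
    exact LowerSet.mem_sInf_iff.mp h U hU
  · intro h
    exact LowerSet.mem_sInf_iff.mpr fun U hU => h (a ∈ U) ⟨U, hU, rfl⟩

end Homs

section Retract

variable {L : Type*} [CompletelyDistribLattice L]

/-- The retraction from lower sets onto a completely distributive lattice. -/
def lowRetr (U : LowerSet L) : L := sSup (U : Set L)

theorem lowRetr_sSup (s : Set (LowerSet L)) : lowRetr (sSup s) = sSup (lowRetr '' s) := by
  apply le_antisymm
  · apply sSup_le
    intro b hb
    rw [SetLike.mem_coe, LowerSet.mem_sSup_iff] at hb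
    obtain ⟨U, hU, hbU⟩ := hb
    exact le_trans (le_sSup hbU) (le_sSup ⟨U, hU, rfl⟩)
  · apply sSup_le
    rintro y ⟨U, hU, rfl⟩
    apply sSup_le_sSup
    intro b hb
    rw [SetLike.mem_coe, LowerSet.mem_sSup_iff]
    exact ⟨U, hU, hb⟩

theorem lowRetr_sInf (s : Set (LowerSet L)) : lowRetr (sInf s) = sInf (lowRetr '' s) := by
  apply le_antisymm
  · apply le_sInf
    rintro y ⟨U, hU, rfl⟩
    apply sSup_le_sSup
    intro b hb
    rw [SetLike.mem_coe, LowerSet.mem_sInf_iff] at hb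
    exact hb U hU
  · have key : sInf (lowRetr '' s) = ⨅ U : s, ⨆ b : ((U : LowerSet L) : Set L), (b : L) := by
      rw [sInf_image']
      congr 1
      funext U
      rw [lowRetr, sSup_eq_iSup']
    rw [key, iInf_iSup_eq]
    apply iSup_le
    intro g
    apply le_sSup
    rw [SetLike.mem_coe, LowerSet.mem_sInf_iff]
    intro U hU
    exact (U.lower (iInf_le _ ⟨U, hU⟩) (g ⟨U, hU⟩).2)

theorem lowRetr_Iic (a : L) : lowRetr (LowerSet.Iic a) = a := by
  rw [lowRetr, LowerSet.coe_Iic, csSup_Iic]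

end Retract

/-- For `L` a completely distributive complete lattice with `⊥ ≠ ⊤`, an equation
`s ≈ t` between extended terms holds in the extended convolution algebra `X → L` iff it
holds in the extended convolution algebra `X → Prop` over the two-element lattice. -/
theorem stmt_15 {I J V X : Type*} {τ₁ : I → ℕ} {τ₂ : J → ℕ}
    (R : ∀ i, (Fin (τ₁ i) → X) → X → Prop) (S : ∀ j, (Fin (τ₂ j) → X) → X → Prop)
    {L : Type*} [CompletelyDistribLattice L] (hL : (⊥ : L) ≠ ⊤)
    (s t : ExtTerm I J τ₁ τ₂ V) :
    (∀ v : V → X → L, evalExtTerm R S v s = evalExtTerm R S v t) ↔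
    (∀ v : V → X → Prop, evalExtTerm R S v s = evalExtTerm R S v t) := by
  constructor
  · intro hl v
    funext x
    apply propEmb_injective hL
    have hs := eval_natural R S (propEmb L) propEmb_sSup propEmb_sInf v s x
    have ht := eval_natural R S (propEmb L) propEmb_sSup propEmb_sInf v t x
    rw [hs, ht, hl (fun p y => propEmb L (v p y))]
  · intro hp v
    have hD : ∀ (w : V → X → LowerSet L) (x : X),
        evalExtTerm R S w s x = evalExtTerm R S w t x := by
      intro w x
      apply SetLike.coe_injective
      apply Set.ext
      intro a
      apply Iff.of_eq
      have hs := eval_natural R S (fun U : LowerSet L => a ∈ U)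
        (memHom_sSup a) (memHom_sInf a) w s x
      have ht := eval_natural R S (fun U : LowerSet L => a ∈ U)
        (memHom_sSup a) (memHom_sInf a) w t x
      show (a ∈ evalExtTerm R S w s x) = (a ∈ evalExtTerm R S w t x)
      rw [hs, ht, hp (fun p y => a ∈ w p y)]
    funext x
    have h1 := eval_natural R S lowRetr lowRetr_sSup lowRetr_sInf
      (fun p y => LowerSet.Iic (v p y)) s x
    have h2 := eval_natural R S lowRetr lowRetr_sSup lowRetr_sInf
      (fun p y => LowerSet.Iic (v p y)) t x
    have hid : (fun p y => lowRetr (LowerSet.Iic (v p y))) = v := by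
      funext p y; exact lowRetr_Iic _
    rw [hid] at h1 h2
    rw [← h1, ← h2, hD _ x]
end

section
/- Let L be a complete lattice, (X, ≤) a partially ordered set, and n a natural number. If R : (Fin n → X) → X → Prop is up-closed (R x⃗ x and x ≤ y imply R x⃗ y), then for every α : Fin n → (X → L), the function f_R α : X → L is monotone. Dually, if S : (Fin n → X) → X → Prop is down-closed (S x⃗ x and y ≤ x imply S x⃗ y), then for every α : Fin n → (X → L), the function g_S α : X → L is monotone. In particular, the monotone functions from X to L form a subalgebra of the extended convolution algebra, closed under the pointwise lattice operations and under all operations f_R and g_S. -/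
/-- If `R` is up-closed for a partial order on `X` then every convolution `f_R α` is
monotone, and if `S` is down-closed then every dual convolution `g_S α` is monotone; in
particular the monotone functions from `X` to `L` are closed under all the operations
`f_R` and `g_S`, forming a subalgebra of the extended convolution algebra. -/
theorem stmt_16 {X L : Type*} [PartialOrder X] [CompleteLattice L] {n : ℕ}
    (R S : (Fin n → X) → X → Prop)
    (hR : ∀ (v : Fin n → X) (x y : X), R v x → x ≤ y → R v y)
    (hS : ∀ (v : Fin n → X) (x y : X), S v x → y ≤ x → S v y) :
    (∀ α : Fin n → X → L, Monotone (conv R α)) ∧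
    (∀ α : Fin n → X → L, Monotone (dconv S α)) := by
  constructor
  · intro α x y hxy
    exact iSup_le fun v => iSup_le fun hv =>
      le_iSup_of_le v (le_iSup_of_le (hR v x y hv hxy) le_rfl)
  · intro α x y hxy
    exact le_iInf fun v => le_iInf fun hv =>
      iInf_le_of_le v (iInf_le_of_le (hS v y x hv hxy) le_rfl)
end

section
/- Let L be a complete distributive lattice with ⊥ ≠ ⊤, X a set, and R : X → X → Prop a binary relation. Define f : (X → L) → (X → L) by f(α)(x) = ⨆ { α(y) : R y x }. Then: (a) α ≤ f(α) holds for all α : X → L (pointwise order) if and only if R is reflexive; (b) f(f(α)) ≤ f(α) holds for all α : X → L if and only if R is transitive. Consequently f is a closure operator on X → L (order preserving with α ≤ f(α) and f(f(α)) = f(α)) if and only if R is reflexive and transitive. -/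
/-- The convolution of a binary relation `R` on `X` over a complete lattice `L`:
`f(α)(x) = ⨆ {α(y) : R y x}`. -/
def relConv {X L : Type*} [CompleteLattice L] (R : X → X → Prop) (α : X → L) : X → L :=
  fun x => ⨆ (y : X) (_ : R y x), α y

/-- For a complete distributive lattice `L` with `⊥ ≠ ⊤` and a binary relation `R` on
`X`: `α ≤ f(α)` always holds iff `R` is reflexive; `f(f(α)) ≤ f(α)` always holds iff `R`
is transitive; and consequently `f` is a closure operator iff `R` is reflexive and
transitive. -/
theorem stmt_17 {X L : Type*} [CompleteLattice L]
    (hdist : ∀ a b c : L, a ⊓ (b ⊔ c) = (a ⊓ b) ⊔ (a ⊓ c))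
    (hL : (⊥ : L) ≠ ⊤) (R : X → X → Prop) :
    ((∀ α : X → L, α ≤ relConv R α) ↔ Reflexive R) ∧
    ((∀ α : X → L, relConv R (relConv R α) ≤ relConv R α) ↔ Transitive R) ∧
    (((∀ α β : X → L, α ≤ β → relConv R α ≤ relConv R β) ∧
        (∀ α : X → L, α ≤ relConv R α) ∧
        (∀ α : X → L, relConv R (relConv R α) = relConv R α)) ↔
      (Reflexive R ∧ Transitive R)) := by
  classical
  have hmono : ∀ α β : X → L, α ≤ β → relConv R α ≤ relConv R β := by
    intro α β h x
    exact iSup₂_mono fun y _ => h y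
  have hrefl : (∀ α : X → L, α ≤ relConv R α) ↔ Reflexive R := by
    constructor
    · intro h x
      by_contra hx
      set α : X → L := fun w => if w = x then ⊤ else ⊥ with hα
      have h1 : (⊤ : L) ≤ relConv R α x := by
        have := h α x
        simpa [hα] using this
      have h2 : relConv R α x ≤ ⊥ := by
        apply iSup₂_le
        intro w hw
        by_cases hwx : w = x
        · exact absurd (hwx ▸ hw) hx
        · simp [hα, hwx]
      exact hL (le_antisymm bot_le (le_trans h1 h2))
    · intro hR α x
      exact le_iSup₂ (f := fun y (_ : R y x) => α y) x (hR x)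
  have htrans : (∀ α : X → L, relConv R (relConv R α) ≤ relConv R α) ↔ Transitive R := by
    constructor
    · intro h y z x hyz hzx
      by_contra hyx
      set α : X → L := fun w => if w = y then ⊤ else ⊥ with hα
      have h1 : (⊤ : L) ≤ relConv R (relConv R α) x := by
        have : (⊤ : L) ≤ relConv R α z :=
          le_trans (by simp [hα]) (le_iSup₂ (f := fun w (_ : R w z) => α w) y hyz)
        exact le_trans this (le_iSup₂ (f := fun w (_ : R w x) => relConv R α w) z hzx)
      have h2 : relConv R α x ≤ ⊥ := by
        apply iSup₂_le
        intro w hw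
        by_cases hwy : w = y
        · exact absurd (hwy ▸ hw) hyx
        · simp [hα, hwy]
      exact hL (le_antisymm bot_le (le_trans h1 (le_trans (h α x) h2)))
    · intro hR α x
      apply iSup₂_le
      intro z hzx
      apply iSup₂_le
      intro y hyz
      exact le_iSup₂ (f := fun w (_ : R w x) => α w) y (hR hyz hzx)
  refine ⟨hrefl, htrans, ?_⟩
  constructor
  · rintro ⟨_, h1, h2⟩
    exact ⟨hrefl.mp h1, htrans.mp fun α => (h2 α).le⟩
  · rintro ⟨hR, hT⟩
    refine ⟨hmono, hrefl.mpr hR, fun α => le_antisymm (htrans.mpr hT α) ?_⟩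
    exact hrefl.mpr hR (relConv R α)
end

section
/- Let G be a group and L a complete Heyting algebra (a frame with Heyting implication, with pseudocomplement ¬a = a ⇨ ⊥). On G → L define the convolution product (α ; β)(z) = ⨆ { α(x) ⊓ β(y) : x y = z }, the converse α˘(x) = α(x⁻¹), and ¬α pointwise. Then for all α, β : G → L, (α˘ ; ¬(α ; β)) ⊓ β = ⊥, equivalently α˘ ; ¬(α ; β) ≤ ¬β; that is, the convolution algebra of G over L satisfies Tarski's relation-algebra axiom (a˘ ; ¬(a ; b)) ⊔ ¬b = ¬b. -/
/-- The convolution product on `G → L` of the multiplication of a group `G`: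
`(α ; β)(z) = ⨆ {α(x) ⊓ β(y) : x * y = z}`. -/
def gconv {G L : Type*} [Group G] [CompleteLattice L] (α β : G → L) : G → L :=
  fun z => ⨆ (p : G × G) (_ : p.1 * p.2 = z), α p.1 ⊓ β p.2

/-- The converse operation on `G → L`: `α˘(x) = α(x⁻¹)`. -/
def gconverse {G L : Type*} [Group G] (α : G → L) : G → L :=
  fun x => α x⁻¹

theorem aux_key {G L : Type*} [Group G] [Order.Frame L] (α β : G → L) :
    gconv (gconverse α) (gconv α β)ᶜ ⊓ β = ⊥ := by
  funext z
  refine le_antisymm ?_ bot_le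
  show gconv (gconverse α) (gconv α β)ᶜ z ⊓ β z ≤ ⊥
  rw [gconv, iSup_inf_eq]
  refine iSup_le fun p => ?_
  rw [iSup_inf_eq]
  refine iSup_le fun hp => ?_
  have hy : p.1⁻¹ * z = p.2 := by rw [← hp]; group
  have hγ : α p.1⁻¹ ⊓ β z ≤ gconv α β p.2 :=
    le_iSup₂_of_le (⟨p.1⁻¹, z⟩ : G × G) hy le_rfl
  calc gconverse α p.1 ⊓ (gconv α β)ᶜ p.2 ⊓ β z
      = (α p.1⁻¹ ⊓ β z) ⊓ (gconv α β p.2)ᶜ := by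
        simp only [gconverse, Pi.compl_apply]; ac_rfl
    _ ≤ gconv α β p.2 ⊓ (gconv α β p.2)ᶜ := inf_le_inf_right _ hγ
    _ = ⊥ := inf_compl_self _

/-- For a group `G` and a complete Heyting algebra `L`, the convolution algebra of `G`
over `L` satisfies Tarski's relation-algebra axiom `(a˘ ; ¬(a ; b)) ⊔ ¬b = ¬b`:
equivalently `(α˘ ; ¬(α ; β)) ⊓ β = ⊥`, i.e. `α˘ ; ¬(α ; β) ≤ ¬β`. Here `¬` is the
pointwise pseudocomplement `¬a = a ⇨ ⊥` of the Heyting structure. -/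
theorem stmt_18 {G L : Type*} [Group G] [Order.Frame L] (α β : G → L) :
    gconv (gconverse α) (gconv α β)ᶜ ⊓ β = ⊥ ∧
    gconv (gconverse α) (gconv α β)ᶜ ≤ βᶜ ∧
    gconv (gconverse α) (gconv α β)ᶜ ⊔ βᶜ = βᶜ := by
  have h := aux_key α β
  have h2 : gconv (gconverse α) (gconv α β)ᶜ ≤ βᶜ :=
    le_compl_iff_disjoint_right.mpr (disjoint_iff.mpr h)
  exact ⟨h, h2, sup_eq_right.mpr h2⟩
end

section
/- Let G be a group and L a complete Heyting algebra with pseudocomplement ¬a = a ⇨ ⊥. On G → L define (α ; β)(z) = ⨆ { α(x) ⊓ β(y) : x y = z }, α˘(x) = α(x⁻¹), and ¬α pointwise. Then the convolution algebra of G over L satisfies the modified De Morgan identities: for all α, β, γ : G → L, the three conditions α ; β ≤ ¬¬γ, α˘ ; ¬γ ≤ ¬β, and ¬γ ; β˘ ≤ ¬α are pairwise equivalent. -/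
lemma gconv_le_iff {G L : Type*} [Group G] [CompleteLattice L] (α β δ : G → L) :
    gconv α β ≤ δ ↔ ∀ x y : G, α x ⊓ β y ≤ δ (x * y) := by
  constructor
  · intro h x y
    refine le_trans ?_ (h (x * y))
    exact le_iSup₂_of_le (x, y) rfl le_rfl
  · intro h z
    simp only [gconv, iSup_le_iff, Prod.forall]
    rintro x y rfl
    exact h x y

/-- For a group `G` and a complete Heyting algebra `L`, the convolution algebra of `G`
over `L` satisfies the modified De Morgan identities: `α ; β ≤ ¬¬γ`, `α˘ ; ¬γ ≤ ¬β` and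
`¬γ ; β˘ ≤ ¬α` are pairwise equivalent, where `¬` is the pointwise pseudocomplement
`¬a = a ⇨ ⊥` and the order on `G → L` is pointwise. -/
theorem stmt_19 {G L : Type*} [Group G] [Order.Frame L] (α β γ : G → L) :
    ((gconv α β ≤ γᶜᶜ) ↔ (gconv (gconverse α) γᶜ ≤ βᶜ)) ∧
    ((gconv (gconverse α) γᶜ ≤ βᶜ) ↔ (gconv γᶜ (gconverse β) ≤ αᶜ)) := by
  simp only [gconv_le_iff, gconverse]
  simp only [Pi.compl_apply, le_compl_iff_disjoint_right, disjoint_iff_inf_le]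
  constructor
  · constructor
    · intro h x y
      have := h x⁻¹ (x * y)
      simpa [inf_comm, inf_left_comm, inf_assoc] using this
    · intro h x y
      have := h x⁻¹ (x * y)
      simpa [inf_comm, inf_left_comm, inf_assoc] using this
  · constructor
    · intro h x y
      have := h (x * y)⁻¹ x
      simpa [inf_comm, inf_left_comm, inf_assoc, mul_assoc, mul_inv_rev] using this
    · intro h x y
      have := h y (x * y)⁻¹
      simpa [inf_comm, inf_left_comm, inf_assoc, mul_assoc, mul_inv_rev] using this
end
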